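/- Let X and Z be real Hausdorff topological vector spaces, C ⊆ Z a convex pointed cone with nonempty interior, K ⊆ X a nonempty convex set, and f, g : K × K → Z maps such that: (i) f is C-essentially quasimonotone relative to the second variable; (ii) for every x ∈ K the map y ↦ g(x,y) is C-convex, and g(x,x) ∈ C for all x ∈ K. Define F₁ : K × K × K → Z by F₁(x,y,z) = f(z,y) + g(x,y). Then the set-valued map G : K ⇉ K, G(y) = {x ∈ K : F₁(x,y,x) ∉ −int C}, is a KKM map, that is, for every finite collection y₁,…,yₙ ∈ K the convex hull of {y₁,…,yₙ} is contained in ⋃ᵢ G(yᵢ). -/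

import Mathlib

open Set

/-!
If `x = ∑ λᵢ yᵢ` lay in none of the sets `G(yᵢ)`, averaging `f(x, yᵢ) + g(x, yᵢ) ∈ -int C` with
the weights `λᵢ` and subtracting the Jensen inequality `∑ λᵢ g(x, yᵢ) ∈ g(x, x) + C ⊆ C` would give
`∑ λᵢ f(x, yᵢ) ∈ -int C - C ⊆ -int C`, contradicting the essential quasimonotonicity of `f` for
the family `(yᵢ)` and the weights `(λᵢ)`. Jensen's inequality for the `C`-convex map `g(x, ·)`
comes from the convexity of its epigraph `{(y, z) | z - g(x, y) ∈ C}`.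
-/

theorem exists_mem_stdSimplex_sum_smul_eq_of_mem_convexHull_range {R E ι : Type*} [Field R]
    [LinearOrder R] [IsStrictOrderedRing R] [AddCommGroup E] [Module R E] [Fintype ι]
    {y : ι → E} {x : E} (hx : x ∈ convexHull R (range y)) :
    ∃ l ∈ stdSimplex R ι, ∑ i, l i • y i = x := by
  classical
  have hy : range y = Fintype.linearCombination R y '' range fun i ↦ Pi.single i 1 := by
    rw [← range_comp]
    congr
    funext i
    simp [Fintype.linearCombination_apply_single]
  rw [hy, ← LinearMap.image_convexHull, convexHull_rangle_single_eq_stdSimplex] at hx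
  obtain ⟨l, hl, rfl⟩ := hx
  exact ⟨l, hl, (Fintype.linearCombination_apply R y l).symm⟩

theorem add_mem_of_convex_of_smul_mem {E : Type*} [AddCommGroup E] [Module ℝ E] {C : Set E}
    (hconv : Convex ℝ C) (hcone : ∀ c ∈ C, ∀ t : ℝ, 0 ≤ t → t • c ∈ C) {a b : E}
    (ha : a ∈ C) (hb : b ∈ C) : a + b ∈ C := by
  have hmid : (1 / 2 : ℝ) • a + (1 / 2 : ℝ) • b ∈ C :=
    hconv ha hb (by norm_num) (by norm_num) (by norm_num)
  simpa [smul_add, smul_smul] using hcone _ hmid 2 (by norm_num)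

open scoped Pointwise in
theorem sub_mem_neg_interior {E : Type*} [AddCommGroup E] [TopologicalSpace E] [ContinuousAdd E]
    {C : Set E} (hadd : ∀ a ∈ C, ∀ b ∈ C, a + b ∈ C) {a b : E} (ha : a ∈ -interior C)
    (hb : b ∈ C) : a - b ∈ -interior C := by
  have : -a + b ∈ interior (C + C) := subset_interior_add_left (add_mem_add ha hb)
  simpa [neg_add_eq_sub] using interior_mono (add_subset_iff.2 hadd) this

section ConeConvex

variable {E F : Type*} [AddCommGroup E] [Module ℝ E] [AddCommGroup F] [Module ℝ F]
  {C : Set F} {K : Set E} {h : E → F}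

def ConeConvexOn (C : Set F) (K : Set E) (h : E → F) : Prop :=
  ∀ y₁ ∈ K, ∀ y₂ ∈ K, ∀ t ∈ Icc (0 : ℝ) 1,
    t • h y₁ + (1 - t) • h y₂ - h (t • y₁ + (1 - t) • y₂) ∈ C

theorem ConeConvexOn.convex_epigraph (hh : ConeConvexOn C K h) (hK : Convex ℝ K)
    (hC : Convex ℝ C) (hadd : ∀ a ∈ C, ∀ b ∈ C, a + b ∈ C) :
    Convex ℝ {p : E × F | p.1 ∈ K ∧ p.2 - h p.1 ∈ C} := by
  rintro ⟨p₁, p₂⟩ ⟨hp₁, hp₂⟩ ⟨q₁, q₂⟩ ⟨hq₁, hq₂⟩ a b ha hb hab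
  obtain rfl : b = 1 - a := by linarith
  refine ⟨hK hp₁ hq₁ ha hb hab, ?_⟩
  have hjensen := hh p₁ hp₁ q₁ hq₁ a ⟨ha, by linarith⟩
  have hsum := hadd _ (hC hp₂ hq₂ ha hb hab) _ hjensen
  convert hsum using 1
  simp only [Prod.smul_mk, Prod.mk_add_mk, smul_sub]
  abel

theorem ConeConvexOn.sum_smul_sub_mem {ι : Type*} (hh : ConeConvexOn C K h) (hK : Convex ℝ K)
    (hC : Convex ℝ C) (hadd : ∀ a ∈ C, ∀ b ∈ C, a + b ∈ C) (h0 : (0 : F) ∈ C) (s : Finset ι)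
    {w : ι → ℝ} {y : ι → E} (hw₀ : ∀ i ∈ s, 0 ≤ w i) (hw₁ : ∑ i ∈ s, w i = 1)
    (hy : ∀ i ∈ s, y i ∈ K) :
    ∑ i ∈ s, w i • h (y i) - h (∑ i ∈ s, w i • y i) ∈ C := by
  have hmem := (hh.convex_epigraph hK hC hadd).sum_mem hw₀ hw₁
    (z := fun i ↦ (y i, h (y i))) fun i hi ↦ ⟨hy i hi, by simpa using h0⟩
  simpa [Prod.fst_sum, Prod.snd_sum] using hmem.2

end ConeConvex

theorem G_is_KKM_general
    {X Z : Type*}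
    [AddCommGroup X] [Module ℝ X]
    [AddCommGroup Z] [Module ℝ Z] [TopologicalSpace Z]
    [IsTopologicalAddGroup Z] [ContinuousSMul ℝ Z]
    (C : Set Z) (hCconv : Convex ℝ C)
    (hCcone : ∀ c ∈ C, ∀ t : ℝ, 0 ≤ t → t • c ∈ C)
    (K : Set X) (hKconv : Convex ℝ K)
    (f g : X → X → Z)
    -- (i) f is C-essentially quasimonotone relative to the second variable
    (hquasi : ∀ (n : ℕ) (y : Fin n → X) (l : Fin n → ℝ), (∀ i, y i ∈ K) →
      (∀ i, 0 ≤ l i) → (∑ i, l i) = 1 →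
      (∑ i, l i • f (∑ j, l j • y j) (y i)) ∉ -interior C)
    -- (ii) for every x ∈ K, y ↦ g(x,y) is C-convex and g(x,x) ∈ C
    (hgconv : ∀ x ∈ K, ∀ y₁ ∈ K, ∀ y₂ ∈ K, ∀ t ∈ Set.Icc (0:ℝ) 1,
      t • g x y₁ + (1-t) • g x y₂ - g x (t • y₁ + (1-t) • y₂) ∈ C)
    (hgdiag : ∀ x ∈ K, g x x ∈ C) :
    -- G : K ⇉ K, G(y) = {x ∈ K : F₁(x,y,x) = f(x,y) + g(x,y) ∉ -int C} is a KKM map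
    ∀ (n : ℕ) (y : Fin n → X), (∀ i, y i ∈ K) →
      convexHull ℝ (Set.range y) ⊆
        ⋃ i, {x ∈ K | f x (y i) + g x (y i) ∉ -interior C} := by
  have hCadd : ∀ a ∈ C, ∀ b ∈ C, a + b ∈ C := fun _ ha _ hb ↦
    add_mem_of_convex_of_smul_mem hCconv hCcone ha hb
  intro n y hy x hx
  obtain ⟨l, ⟨hl₀, hl₁⟩, hxl⟩ := exists_mem_stdSimplex_sum_smul_eq_of_mem_convexHull_range hx
  have hxK : x ∈ K := hxl ▸ hKconv.sum_mem (fun i _ ↦ hl₀ i) hl₁ fun i _ ↦ hy i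
  by_contra hG
  have hfg : ∀ i, f x (y i) + g x (y i) ∈ -interior C := fun i ↦
    by_contra fun hi ↦ hG (mem_iUnion.2 ⟨i, hxK, hi⟩)
  have hsum_fg : ∑ i, l i • (f x (y i) + g x (y i)) ∈ -interior C :=
    hCconv.interior.neg.sum_mem (fun i _ ↦ hl₀ i) hl₁ fun i _ ↦ hfg i
  have hsum_g : ∑ i, l i • g x (y i) ∈ C := by
    have h0 : (0 : Z) ∈ C := by simpa using hCcone _ (hgdiag x hxK) 0 le_rfl
    have hjensen := ConeConvexOn.sum_smul_sub_mem (hgconv x hxK) hKconv hCconv hCadd h0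
      Finset.univ (fun i _ ↦ hl₀ i) hl₁ fun i _ ↦ hy i
    rw [hxl] at hjensen
    simpa using hCadd _ hjensen _ (hgdiag x hxK)
  apply hquasi n y l hy hl₀ hl₁
  rw [hxl]
  simpa [smul_add, Finset.sum_add_distrib] using sub_mem_neg_interior hCadd hsum_fg hsum_g

theorem G_is_KKM
    {X Z : Type*}
    [AddCommGroup X] [Module ℝ X] [TopologicalSpace X]
    [IsTopologicalAddGroup X] [ContinuousSMul ℝ X] [T2Space X]
    [AddCommGroup Z] [Module ℝ Z] [TopologicalSpace Z]
    [IsTopologicalAddGroup Z] [ContinuousSMul ℝ Z] [T2Space Z]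
    (C : Set Z) (hCconv : Convex ℝ C)
    (hCcone : ∀ c ∈ C, ∀ t : ℝ, 0 ≤ t → t • c ∈ C)
    (hCpointed : C ∩ (-C) = {0})
    (hCint : (interior C).Nonempty)
    (K : Set X) (hK : K.Nonempty) (hKconv : Convex ℝ K)
    (f g : X → X → Z)
    -- (i) f is C-essentially quasimonotone relative to the second variable
    (hquasi : ∀ (n : ℕ) (y : Fin n → X) (l : Fin n → ℝ), (∀ i, y i ∈ K) →
      (∀ i, 0 ≤ l i) → (∑ i, l i) = 1 →
      (∑ i, l i • f (∑ j, l j • y j) (y i)) ∉ -interior C)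
    -- (ii) for every x ∈ K, y ↦ g(x,y) is C-convex and g(x,x) ∈ C
    (hgconv : ∀ x ∈ K, ∀ y₁ ∈ K, ∀ y₂ ∈ K, ∀ t ∈ Set.Icc (0:ℝ) 1,
      t • g x y₁ + (1-t) • g x y₂ - g x (t • y₁ + (1-t) • y₂) ∈ C)
    (hgdiag : ∀ x ∈ K, g x x ∈ C) :
    -- G : K ⇉ K, G(y) = {x ∈ K : F₁(x,y,x) = f(x,y) + g(x,y) ∉ -int C} is a KKM map
    ∀ (n : ℕ) (y : Fin n → X), (∀ i, y i ∈ K) →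
      convexHull ℝ (Set.range y) ⊆
        ⋃ i, {x ∈ K | f x (y i) + g x (y i) ∉ -interior C} :=
  G_is_KKM_general C hCconv hCcone K hKconv f g hquasi hgconv hgdiag
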